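/- arXiv:1806.08176 — 3 statements merged into one kernel-verified Lean document; each statement's English description precedes it below -/
import Mathlib

section
/- Let (M,g) be a complete Riemannian surface with bounded curvature, and let u, u' : M → R be bounded C² functions satisfying (1/2)Δ_g u = F(u,x) and (1/2)Δ_g u' = F(u',x) where F(t,x) = e^{2t} - e^{-2t}‖q‖²_g(x) + (1/2)K_g(x) with ‖q‖²_g bounded. Assume the Cheng–Yau maximum principle holds: for any bounded C² function η on M there is a sequence x_n with Δ_g η(x_n) ≤ 1/n and η(x_n) ≥ sup η - 1/n. Then u = u'. -/
open Real

lemma stmt6_aux {M : Type*} [Nonempty M]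
    (Δ : (M → ℝ) → (M → ℝ))
    (hΔ : ∀ f g : M → ℝ, Δ (f - g) = Δ f - Δ g)
    (u u' nq K : M → ℝ)
    (hnq : ∀ x, 0 ≤ nq x)
    (hu : ∃ C, ∀ x, |u x| ≤ C) (hu' : ∃ C, ∀ x, |u' x| ≤ C)
    (heq : ∀ x, (1 / 2) * Δ u x =
      Real.exp (2 * u x) - Real.exp (-(2 * u x)) * nq x + (1 / 2) * K x)
    (heq' : ∀ x, (1 / 2) * Δ u' x =
      Real.exp (2 * u' x) - Real.exp (-(2 * u' x)) * nq x + (1 / 2) * K x)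
    (hMP : ∀ η : M → ℝ, (∃ C, ∀ x, |η x| ≤ C) →
      ∀ n : ℕ, 0 < n → ∃ x, Δ η x ≤ 1 / n ∧ (⨆ y, η y) - 1 / n ≤ η x) :
    ∀ x, u x ≤ u' x := by
  obtain ⟨Cu, hCu⟩ := hu
  obtain ⟨Cu', hCu'⟩ := hu'
  set η : M → ℝ := u - u' with hη
  have hηBdd : ∀ x, |η x| ≤ Cu + Cu' := by
    intro x
    have := abs_sub (u x) (u' x)
    calc |η x| = |u x - u' x| := rfl
      _ ≤ |u x| + |u' x| := abs_sub _ _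
      _ ≤ Cu + Cu' := add_le_add (hCu x) (hCu' x)
  have hBdd : BddAbove (Set.range η) := ⟨Cu + Cu', by
    rintro _ ⟨x, rfl⟩; exact (abs_le.mp (hηBdd x)).2⟩
  set S := ⨆ y, η y with hS
  -- suffices S ≤ 0
  suffices hS0 : S ≤ 0 by
    intro x
    have : η x ≤ S := le_ciSup hBdd x
    have : u x - u' x ≤ 0 := le_trans this hS0
    linarith
  by_contra hpos
  push_neg at hpos
  set c : ℝ := Real.exp (-(2 * Cu')) with hc
  have hcpos : 0 < c := Real.exp_pos _
  -- choose n large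
  have hmin : (0 : ℝ) < min (S / 2) (2 * c * S) := by
    apply lt_min
    · linarith
    · positivity
  obtain ⟨n, hn1, hn2⟩ : ∃ n : ℕ, 0 < n ∧ (1 : ℝ) / n < min (S / 2) (2 * c * S) := by
    obtain ⟨n, hn⟩ := exists_nat_one_div_lt hmin
    exact ⟨n + 1, Nat.succ_pos n, by exact_mod_cast hn⟩
  obtain ⟨x, hx1, hx2⟩ := hMP η ⟨Cu + Cu', hηBdd⟩ n hn1
  have h1n : (1 : ℝ) / n < S / 2 := lt_of_lt_of_le hn2 (min_le_left _ _)
  have h2n : (1 : ℝ) / n < 2 * c * S := lt_of_lt_of_le hn2 (min_le_right _ _)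
  have hηx : S / 2 ≤ η x := by linarith [hx2]
  have hηx0 : 0 < η x := lt_of_lt_of_le (by linarith) hηx
  have huu' : u' x ≤ u x := by
    have : 0 < u x - u' x := hηx0
    linarith
  -- compute Δη x
  have hΔη : Δ η x = Δ u x - Δ u' x := by
    rw [hη, hΔ]; rfl
  have hΔu : Δ u x = 2 * (Real.exp (2 * u x) - Real.exp (-(2 * u x)) * nq x + (1 / 2) * K x) := by
    have := heq x; linarith
  have hΔu' : Δ u' x = 2 * (Real.exp (2 * u' x) - Real.exp (-(2 * u' x)) * nq x + (1 / 2) * K x) := by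
    have := heq' x; linarith
  -- lower bound
  have hexp1 : Real.exp (-(2 * u x)) ≤ Real.exp (-(2 * u' x)) :=
    Real.exp_le_exp.mpr (by linarith)
  have hterm : 0 ≤ (Real.exp (-(2 * u' x)) - Real.exp (-(2 * u x))) * nq x :=
    mul_nonneg (by linarith) (hnq x)
  have hexp2 : Real.exp (2 * u' x) * (2 * η x) ≤ Real.exp (2 * u x) - Real.exp (2 * u' x) := by
    have h := Real.add_one_le_exp (2 * η x)
    have hrw : Real.exp (2 * u x) = Real.exp (2 * u' x) * Real.exp (2 * η x) := by
      rw [← Real.exp_add]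
      congr 1
      simp [hη, Pi.sub_apply]
      ring
    rw [hrw]
    nlinarith [Real.exp_pos (2 * u' x)]
  have hc_le : c ≤ Real.exp (2 * u' x) := by
    apply Real.exp_le_exp.mpr
    have := abs_le.mp (hCu' x)
    linarith [this.1]
  have hlow : 2 * c * S ≤ Δ η x := by
    have h1 : c * (2 * η x) ≤ Real.exp (2 * u' x) * (2 * η x) := by
      apply mul_le_mul_of_nonneg_right hc_le (by linarith)
    have h2 : 2 * c * (S / 2) ≤ c * (2 * η x) := by nlinarith
    rw [hΔη, hΔu, hΔu']
    nlinarith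
  linarith
/-- Uniqueness of bounded solutions via the Cheng–Yau maximum principle.
On a (complete, bounded-curvature) surface `M` with Laplacian `Δ`, if `u, u'`
are bounded solutions of `(1/2)Δu = F(u,x)` with
`F(t,x) = e^{2t} - e^{-2t}‖q‖²_g(x) + (1/2)K_g(x)`, `‖q‖²_g ≥ 0` bounded, and
the Cheng–Yau maximum principle holds (any bounded function `η` admits points
`x_n` with `Δη(x_n) ≤ 1/n` and `η(x_n) ≥ sup η - 1/n`), then `u = u'`. -/
theorem stmt6 {M : Type*} [Nonempty M]
    (Δ : (M → ℝ) → (M → ℝ))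
    (hΔ : ∀ f g : M → ℝ, Δ (f - g) = Δ f - Δ g)
    (u u' nq K : M → ℝ)
    (hnq : ∀ x, 0 ≤ nq x) (hnqBdd : ∃ C, ∀ x, |nq x| ≤ C)
    (hu : ∃ C, ∀ x, |u x| ≤ C) (hu' : ∃ C, ∀ x, |u' x| ≤ C)
    (heq : ∀ x, (1 / 2) * Δ u x =
      Real.exp (2 * u x) - Real.exp (-(2 * u x)) * nq x + (1 / 2) * K x)
    (heq' : ∀ x, (1 / 2) * Δ u' x =
      Real.exp (2 * u' x) - Real.exp (-(2 * u' x)) * nq x + (1 / 2) * K x)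
    (hMP : ∀ η : M → ℝ, (∃ C, ∀ x, |η x| ≤ C) →
      ∀ n : ℕ, 0 < n → ∃ x, Δ η x ≤ 1 / n ∧ (⨆ y, η y) - 1 / n ≤ η x) :
    u = u' := by
  funext x
  exact le_antisymm
    (stmt6_aux Δ hΔ u u' nq K hnq hu hu' heq heq' hMP x)
    (stmt6_aux Δ hΔ u' u nq K hnq hu' hu heq' heq hMP x)
end

section
/- For R ∈ C with Re(R) = 0, the matrix A of the previous statement has eigenvalue ±√(2(|R|)) each with algebraic multiplicity 2 and 0 is not an eigenvalue unless R = 0; in particular the characteristic polynomial is (t² - 2|R|)², so A is not diagonalisable with four distinct eigenvalues, reflecting that one of the two PSL(2,R) holonomies is parabolic. -/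
/-! Since `R` is purely imaginary, `conj R = -R` and `(R / s)² = -s²`, so `A` is an
off-diagonal block matrix whose blocks multiply to `s² • [[2, 0], [0, 2]]`; hence its
characteristic polynomial is `(X² - 2s²)² = (X² - 2|R|)²`. -/

open Polynomial Matrix

/- The characteristic polynomial of `[[0, B], [C, 0]]` is `det (X² - B C)`; here
`B C = [[v² - u², u² + v²], [u² + v², v² - u²]]`. -/
theorem charpoly_offDiag_block {R : Type*} [CommRing R] (u v : R) :
    (!![0, 0, u, v; 0, 0, -u, v; -u, u, 0, 0; v, v, 0, 0] : Matrix (Fin 4) (Fin 4) R).charpoly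
      = (X ^ 2 - C (v ^ 2 - u ^ 2)) ^ 2 - C ((u ^ 2 + v ^ 2) ^ 2) := by
  rw [charpoly, det_succ_row_zero, Fin.sum_univ_four]
  simp [det_fin_three, Fin.succAbove]
  ring

theorem rootMultiplicity_sq_X_sq_sub_C_sq {K : Type*} [CommRing K] [IsDomain K] {a : K}
    (ha : a ≠ -a) : ((X ^ 2 - C (a ^ 2)) ^ 2).rootMultiplicity a = 2 := by
  have hfac : (X ^ 2 - C (a ^ 2)) ^ 2 = (X - C a) ^ 2 * (X - C (-a)) ^ 2 := by
    simp only [map_neg, map_pow]; ring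
  have hne : (X - C a) ^ 2 * (X - C (-a)) ^ 2 ≠ 0 :=
    mul_ne_zero (pow_ne_zero _ (X_sub_C_ne_zero a)) (pow_ne_zero _ (X_sub_C_ne_zero (-a)))
  have hnotRoot : ¬((X - C (-a)) ^ 2).IsRoot a := by
    simpa only [IsRoot.def, eval_pow, eval_sub, eval_X, eval_C]
      using pow_ne_zero 2 (sub_ne_zero.2 ha)
  rw [hfac, rootMultiplicity_mul hne, rootMultiplicity_X_sub_C_pow,
    rootMultiplicity_eq_zero hnotRoot]

theorem Complex.conj_eq_neg_of_re_eq_zero {z : ℂ} (hz : z.re = 0) : (starRingEnd ℂ) z = -z :=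
  Complex.ext (by simp [hz]) (by simp)

theorem Complex.sq_eq_neg_sq_norm_of_re_eq_zero {z : ℂ} (hz : z.re = 0) :
    z ^ 2 = -(‖z‖ : ℂ) ^ 2 := by
  have hmul : z * -z = (‖z‖ : ℂ) ^ 2 := by
    rw [← Complex.conj_eq_neg_of_re_eq_zero hz, Complex.mul_conj']
  linear_combination -hmul

/-- For `R ≠ 0` purely imaginary, the matrix `A` has characteristic polynomial
`(t² - 2|R|)²`, so the eigenvalues `±√(2|R|)` each have algebraic multiplicity `2`,
and `0` is not an eigenvalue. -/
theorem stmt10 (R : ℂ) (hR : R ≠ 0) (hre : R.re = 0) :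
    let s : ℂ := ((Real.sqrt (‖R‖) : ℝ) : ℂ)
    let A : Matrix (Fin 4) (Fin 4) ℂ :=
      !![0, 0, -(starRingEnd ℂ) R / s, s;
         0, 0, -R / s, s;
         -R / s, -(starRingEnd ℂ) R / s, 0, 0;
         s, s, 0, 0]
    A.charpoly = (X ^ 2 - C ((2 * ‖R‖ : ℝ) : ℂ)) ^ 2 ∧
    A.charpoly.rootMultiplicity ((Real.sqrt (2 * ‖R‖) : ℝ) : ℂ) = 2 ∧
    A.charpoly.rootMultiplicity (-((Real.sqrt (2 * ‖R‖) : ℝ) : ℂ)) = 2 ∧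
    ¬ A.charpoly.IsRoot 0 := by
  intro s A
  have hnorm : (0 : ℝ) < ‖R‖ := norm_pos_iff.mpr hR
  have hs2 : s ^ 2 = ‖R‖ := by rw [← Complex.ofReal_pow, Real.sq_sqrt hnorm.le]
  have hu2 : (R / s) ^ 2 = -s ^ 2 := by
    rw [div_pow, Complex.sq_eq_neg_sq_norm_of_re_eq_zero hre, hs2]
    field_simp [Complex.ofReal_ne_zero.2 hnorm.ne']
  have hA : A = !![0, 0, R / s, s; 0, 0, -(R / s), s; -(R / s), R / s, 0, 0; s, s, 0, 0] := by
    simp [A, Complex.conj_eq_neg_of_re_eq_zero hre, neg_div]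
  have hcharpoly : A.charpoly = (X ^ 2 - C ((2 * ‖R‖ : ℝ) : ℂ)) ^ 2 := by
    rw [hA, charpoly_offDiag_block, hu2, neg_add_cancel, zero_pow two_ne_zero, map_zero, sub_zero,
      sub_neg_eq_add, ← two_mul, hs2, Complex.ofReal_mul, Complex.ofReal_ofNat]
  set q : ℂ := ((Real.sqrt (2 * ‖R‖) : ℝ) : ℂ)
  have hq2 : ((2 * ‖R‖ : ℝ) : ℂ) = q ^ 2 := by
    rw [← Complex.ofReal_pow, Real.sq_sqrt (by positivity)]
  have hq : q ≠ -q := by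
    rw [ne_eq, CharZero.eq_neg_self_iff, Complex.ofReal_eq_zero]
    exact (Real.sqrt_pos.mpr (by positivity)).ne'
  refine ⟨hcharpoly, ?_, ?_, ?_⟩
  · rw [hcharpoly, hq2, rootMultiplicity_sq_X_sq_sub_C_sq hq]
  · rw [hcharpoly, hq2, ← neg_sq q,
      rootMultiplicity_sq_X_sq_sub_C_sq (a := -q) (by rwa [neg_neg, ne_comm])]
  · simpa [hcharpoly, IsRoot] using hR
end

section
/- For the horospherical surface σ₀(te^{iθ} + iy) with fixed y and θ ∈ (-π/4, π/4), the projective limit as t → +∞ of [σ₀(te^{iθ}+iy)] in RP³ is the point [1,0,1,0]; for θ ∈ (π/4, 3π/4) it is [0,1,0,1]; for θ ∈ (3π/4, 5π/4) it is [-1,0,1,0]; and for θ ∈ (5π/4, 7π/4) it is [0,-1,0,1]. -/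
open Real Filter Set Topology

/-! Write `a = Re ω`, `b = Im ω`. Along the ray `ω = te^{iθ} + iy` one of `|a|`, `|b|` outgrows the
other, according to the sign of `cos 2θ = cos² θ - sin² θ`. Dividing `σ₀` by `cosh` of twice the
dominant coordinate, the two other entries are `O(e^{2(|b| - |a|)})` (or the reverse) and tend to
`0`, while the `sinh` entry becomes `tanh`, which tends to the sign of `cos θ` (resp. `sin θ`). -/

/-- `horosphericalSurface a b = σ₀(a + ib)`. -/
noncomputable def horosphericalSurface (a b : ℝ) : Fin 4 → ℝ :=
  ![(1 / √2) * sinh (2 * a), (1 / √2) * sinh (2 * b),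
    (1 / √2) * cosh (2 * a), (1 / √2) * cosh (2 * b)]

theorem sqrt_two_div_smul_horosphericalSurface (c a b : ℝ) :
    (√2 / c) • horosphericalSurface a b =
      ![sinh (2 * a) / c, sinh (2 * b) / c, cosh (2 * a) / c, cosh (2 * b) / c] := by
  have : √2 ≠ 0 := by positivity
  ext i
  fin_cases i <;> simp [horosphericalSurface] <;> field_simp

theorem tendsto_tanh_atTop : Tendsto tanh atTop (𝓝 1) := by
  have h : Tendsto (fun x => exp (-x) / cosh x) atTop (𝓝 0) :=
    squeeze_zero (fun x => by positivity) (fun x => div_le_self (exp_pos _).le (one_le_cosh x))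
      tendsto_exp_neg_atTop_nhds_zero
  refine (sub_zero (1 : ℝ) ▸ h.const_sub 1).congr fun x => ?_
  rw [← cosh_sub_sinh, tanh_eq_sinh_div_cosh]
  field_simp [(cosh_pos x).ne']
  ring

theorem tendsto_tanh_atBot : Tendsto tanh atBot (𝓝 (-1)) :=
  (tendsto_tanh_atTop.comp tendsto_neg_atBot_atTop).neg.congr fun x => by simp

theorem cosh_le_exp_abs (x : ℝ) : cosh x ≤ exp |x| := by
  rw [← cosh_abs, cosh_eq]
  linarith [exp_le_exp.2 (neg_le_self (abs_nonneg x))]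

theorem exp_abs_le_two_mul_cosh (x : ℝ) : exp |x| ≤ 2 * cosh x := by
  rw [← cosh_abs, cosh_eq]
  linarith [exp_pos (-|x|)]

theorem cosh_div_cosh_le (a b : ℝ) : cosh b / cosh a ≤ 2 * exp (|b| - |a|) := by
  rw [div_le_iff₀ (cosh_pos a)]
  calc cosh b ≤ exp |b| := cosh_le_exp_abs b
    _ = exp (|b| - |a|) * exp |a| := by rw [← exp_add, sub_add_cancel]
    _ ≤ exp (|b| - |a|) * (2 * cosh a) := by gcongr; exact exp_abs_le_two_mul_cosh a
    _ = 2 * exp (|b| - |a|) * cosh a := by ring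

section Dominance

variable {α : Type*} {l : Filter α} {a b : α → ℝ}

theorem tendsto_cosh_div_cosh_of_abs_sub_abs (h : Tendsto (fun t => |a t| - |b t|) l atTop) :
    Tendsto (fun t => cosh (b t) / cosh (a t)) l (𝓝 0) := by
  have hexp : Tendsto (fun t => 2 * exp (|b t| - |a t|)) l (𝓝 0) := by
    simpa using (tendsto_exp_atBot.comp (tendsto_neg_atTop_atBot.comp h)).const_mul 2
  exact squeeze_zero (fun t => (div_pos (cosh_pos _) (cosh_pos _)).le)
    (fun t => cosh_div_cosh_le _ _) hexp

theorem tendsto_sinh_div_cosh_of_abs_sub_abs (h : Tendsto (fun t => |a t| - |b t|) l atTop) :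
    Tendsto (fun t => sinh (b t) / cosh (a t)) l (𝓝 0) := by
  refine squeeze_zero_norm (fun t => ?_) (tendsto_cosh_div_cosh_of_abs_sub_abs h)
  rw [norm_div, norm_of_nonneg (cosh_pos _).le, norm_eq_abs, abs_sinh, ← cosh_abs (b t)]
  gcongr
  exact (sinh_lt_cosh _).le

theorem tendsto_abs_two_mul_sub_abs_two_mul (h : Tendsto (fun t => |a t| - |b t|) l atTop) :
    Tendsto (fun t => |2 * a t| - |2 * b t|) l atTop :=
  (h.const_mul_atTop two_pos).congr fun t => by simp only [abs_mul, abs_two]; ring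

theorem tendsto_smul_horosphericalSurface_of_re_dominant
    (h : Tendsto (fun t => |a t| - |b t|) l atTop) {ε : ℝ}
    (hε : Tendsto (fun t => tanh (2 * a t)) l (𝓝 ε)) :
    Tendsto (fun t => (√2 / cosh (2 * a t)) • horosphericalSurface (a t) (b t)) l
      (𝓝 ![ε, 0, 1, 0]) := by
  have h2 := tendsto_abs_two_mul_sub_abs_two_mul h
  simp only [sqrt_two_div_smul_horosphericalSurface, div_self (cosh_pos _).ne',
    ← tanh_eq_sinh_div_cosh]
  exact hε.matrixVecCons <| (tendsto_sinh_div_cosh_of_abs_sub_abs h2).matrixVecCons <|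
    tendsto_const_nhds.matrixVecCons <|
      (tendsto_cosh_div_cosh_of_abs_sub_abs h2).matrixVecCons tendsto_const_nhds

theorem tendsto_smul_horosphericalSurface_of_im_dominant
    (h : Tendsto (fun t => |b t| - |a t|) l atTop) {ε : ℝ}
    (hε : Tendsto (fun t => tanh (2 * b t)) l (𝓝 ε)) :
    Tendsto (fun t => (√2 / cosh (2 * b t)) • horosphericalSurface (a t) (b t)) l
      (𝓝 ![0, ε, 0, 1]) := by
  have h2 := tendsto_abs_two_mul_sub_abs_two_mul h
  simp only [sqrt_two_div_smul_horosphericalSurface, div_self (cosh_pos _).ne',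
    ← tanh_eq_sinh_div_cosh]
  exact (tendsto_sinh_div_cosh_of_abs_sub_abs h2).matrixVecCons <| hε.matrixVecCons <|
    (tendsto_cosh_div_cosh_of_abs_sub_abs h2).matrixVecCons <|
      tendsto_const_nhds.matrixVecCons tendsto_const_nhds

end Dominance

theorem tendsto_abs_mul_add_sub_abs_mul_add {p s : ℝ} (h : |s| < |p|) (q r : ℝ) :
    Tendsto (fun t => |t * p + q| - |t * s + r|) atTop atTop := by
  have hlin : Tendsto (fun t => t * (|p| - |s|) - (|q| + |r|)) atTop atTop :=
    tendsto_atTop_add_const_right _ _ (tendsto_id.atTop_mul_const (sub_pos.2 h))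
  refine tendsto_atTop_mono' _ ?_ hlin
  filter_upwards [eventually_ge_atTop 0] with t ht
  have hp := abs_add_le (t * p + q) (-q)
  have hs := abs_add_le (t * s) r
  rw [add_neg_cancel_right, abs_neg] at hp
  rw [abs_mul, abs_of_nonneg ht] at hp hs
  linarith

theorem abs_sin_lt_abs_cos_iff {θ : ℝ} : |sin θ| < |cos θ| ↔ 0 < cos (2 * θ) := by
  rw [cos_two_mul', sub_pos, sq_lt_sq]

theorem abs_cos_lt_abs_sin_iff {θ : ℝ} : |cos θ| < |sin θ| ↔ cos (2 * θ) < 0 := by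
  rw [cos_two_mul', sub_neg, sq_lt_sq]

/-- Projective limits of the horospherical surface `σ₀(te^{iθ} + iy)` as `t → ∞`:
convergence in `ℝP³` is expressed by the existence of rescalings `c t` such that
`c t • σ₀(te^{iθ} + iy)` converges in `ℝ⁴` to the (nonzero) representative vector
of the limit point.  For `θ ∈ (-π/4, π/4)` the limit is `[1,0,1,0]`, for
`θ ∈ (π/4, 3π/4)` it is `[0,1,0,1]`, for `θ ∈ (3π/4, 5π/4)` it is `[-1,0,1,0]`,
and for `θ ∈ (5π/4, 7π/4)` it is `[0,-1,0,1]`. -/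
theorem stmt16 (y θ : ℝ) :
    let σ : ℝ → ℝ → (Fin 4 → ℝ) := fun a b =>
      ![(1 / Real.sqrt 2) * Real.sinh (2 * a),
        (1 / Real.sqrt 2) * Real.sinh (2 * b),
        (1 / Real.sqrt 2) * Real.cosh (2 * a),
        (1 / Real.sqrt 2) * Real.cosh (2 * b)]
    -- σ₀(te^{iθ} + iy) has Re = t cos θ, Im = t sin θ + y
    (θ ∈ Ioo (-(π / 4)) (π / 4) → ∃ c : ℝ → ℝ,
      Tendsto (fun t => c t • σ (t * Real.cos θ) (t * Real.sin θ + y)) atTop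
        (nhds ![1, 0, 1, 0])) ∧
    (θ ∈ Ioo (π / 4) (3 * π / 4) → ∃ c : ℝ → ℝ,
      Tendsto (fun t => c t • σ (t * Real.cos θ) (t * Real.sin θ + y)) atTop
        (nhds ![0, 1, 0, 1])) ∧
    (θ ∈ Ioo (3 * π / 4) (5 * π / 4) → ∃ c : ℝ → ℝ,
      Tendsto (fun t => c t • σ (t * Real.cos θ) (t * Real.sin θ + y)) atTop
        (nhds ![-1, 0, 1, 0])) ∧
    (θ ∈ Ioo (5 * π / 4) (7 * π / 4) → ∃ c : ℝ → ℝ,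
      Tendsto (fun t => c t • σ (t * Real.cos θ) (t * Real.sin θ + y)) atTop
        (nhds ![0, -1, 0, 1])) := by
  intro σ
  have hπ := pi_pos
  refine ⟨fun ⟨h₁, h₂⟩ => ?_, fun ⟨h₁, h₂⟩ => ?_, fun ⟨h₁, h₂⟩ => ?_, fun ⟨h₁, h₂⟩ => ?_⟩
  · have hcos : 0 < cos θ := cos_pos_of_mem_Ioo ⟨by linarith, by linarith⟩
    have hdom : |sin θ| < |cos θ| :=
      abs_sin_lt_abs_cos_iff.2 (cos_pos_of_mem_Ioo ⟨by linarith, by linarith⟩)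
    exact ⟨_, tendsto_smul_horosphericalSurface_of_re_dominant
      (by simpa using tendsto_abs_mul_add_sub_abs_mul_add hdom 0 y)
      (tendsto_tanh_atTop.comp ((tendsto_id.atTop_mul_const hcos).const_mul_atTop two_pos))⟩
  · have hsin : 0 < sin θ := sin_pos_of_pos_of_lt_pi (by linarith) (by linarith)
    have hdom : |cos θ| < |sin θ| :=
      abs_cos_lt_abs_sin_iff.2 (cos_neg_of_pi_div_two_lt_of_lt (by linarith) (by linarith))
    exact ⟨_, tendsto_smul_horosphericalSurface_of_im_dominant
      (by simpa using tendsto_abs_mul_add_sub_abs_mul_add hdom y 0)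
      (tendsto_tanh_atTop.comp (((tendsto_id.atTop_mul_const hsin).atTop_add
        tendsto_const_nhds).const_mul_atTop two_pos))⟩
  · have hcos : cos θ < 0 := cos_neg_of_pi_div_two_lt_of_lt (by linarith) (by linarith)
    have hdom : |sin θ| < |cos θ| := abs_sin_lt_abs_cos_iff.2 <| by
      rw [← cos_sub_two_pi]; exact cos_pos_of_mem_Ioo ⟨by linarith, by linarith⟩
    exact ⟨_, tendsto_smul_horosphericalSurface_of_re_dominant
      (by simpa using tendsto_abs_mul_add_sub_abs_mul_add hdom 0 y)
      (tendsto_tanh_atBot.comp ((tendsto_id.atTop_mul_const_of_neg hcos).const_mul_atBot two_pos))⟩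
  · have hsin : sin θ < 0 := by
      rw [← sin_sub_two_pi]; exact sin_neg_of_neg_of_neg_pi_lt (by linarith) (by linarith)
    have hdom : |cos θ| < |sin θ| := abs_cos_lt_abs_sin_iff.2 <| by
      rw [← cos_sub_two_pi]; exact cos_neg_of_pi_div_two_lt_of_lt (by linarith) (by linarith)
    exact ⟨_, tendsto_smul_horosphericalSurface_of_im_dominant
      (by simpa using tendsto_abs_mul_add_sub_abs_mul_add hdom y 0)
      (tendsto_tanh_atBot.comp (((tendsto_id.atTop_mul_const_of_neg hsin).atBot_add
        tendsto_const_nhds).const_mul_atBot two_pos))⟩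
end
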